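/- arXiv:1804.08370 — 6 statements merged into one kernel-verified Lean document; each statement's English description precedes it below -/
import Mathlib

section
/- Let S : Θ → Θ be invertible on a compact metric space Θ, and let θ ↦ f_θ ∈ D(I) satisfy d⁰(f_θ, f_{θ'}) ≤ L·d(θ,θ') for all θ, θ'. Suppose θ' lies in the local stable fibre of θ, meaning d(S^{−n}θ, S^{−n}θ') ≤ C α^n d(θ,θ') for all n > 0, with constants C > 0, α ∈ (0,1), and suppose α·Q_f < 1 where Q_f = sup_{θ,y} f'_θ(y). Then for all n, k with 0 ≤ k ≤ n, d⁰(f^k_{S^{−n}θ} ∘ (f^k_{S^{−n}θ'})⁻¹, id) ≤ C' α^{n−k} d(θ,θ'), where C' = αCL/(1 − αQ_f) and f^k_θ = f_{S^{k−1}θ} ∘ ⋯ ∘ f_θ. -/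
open Set Filter

/-- Iterates of the fibre maps: `fiter S f n θ = f_{S^{n-1}θ} ∘ ⋯ ∘ f_θ`. -/
def fiter {Θ : Type*} (S : Θ → Θ) (f : Θ → ℝ → ℝ) : ℕ → Θ → ℝ → ℝ
  | 0, _, y => y
  | n + 1, θ, y => f (S^[n] θ) (fiter S f n θ y)

/-!
With `A = S^{-n}θ`, `B = S^{-n}θ'` and `u k = |f^k_A y - f^k_B y|`, one more step of the
iteration moves the fibre points apart by at most `Q_f u k` (mean value theorem) plus
`L d(S^k A, S^k B) = L d(S^{-(n-k)}θ, S^{-(n-k)}θ') ≤ L C α^{n-k} d(θ,θ')`. Since `u 0 = 0` and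
`α Q_f < 1`, this linear recurrence keeps `u k` below a fixed multiple of `α^{n-k}`.
-/

theorem Equiv.iterate_apply_iterate_symm {α : Type*} (e : α ≃ α) {k n : ℕ} (hk : k ≤ n)
    (x : α) : e^[k] (e.symm^[n] x) = e.symm^[n - k] x := by
  obtain ⟨m, rfl⟩ := Nat.exists_eq_add_of_le hk
  rw [Function.iterate_add_apply, Function.LeftInverse.iterate e.apply_symm_apply k,
    Nat.add_sub_cancel_left]

theorem abs_image_sub_le_of_derivWithin_le {g : ℝ → ℝ} {s : Set ℝ} {Q : ℝ} (hs : Convex ℝ s)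
    (hg : DifferentiableOn ℝ g s) (hpos : ∀ x ∈ s, 0 ≤ derivWithin g s x)
    (hle : ∀ x ∈ s, derivWithin g s x ≤ Q) {a b : ℝ} (ha : a ∈ s) (hb : b ∈ s) :
    |g a - g b| ≤ Q * |a - b| := by
  have bound : ∀ x ∈ s, ‖derivWithin g s x‖ ≤ Q := fun x hx => by
    rw [Real.norm_eq_abs, abs_of_nonneg (hpos x hx)]
    exact hle x hx
  simpa only [Real.norm_eq_abs] using hs.norm_image_sub_le_of_norm_derivWithin_le hg bound hb ha

theorem le_mul_pow_of_le_mul_add_pow {u : ℕ → ℝ} {Q α B : ℝ} {n : ℕ} (hα : 0 ≤ α) (hB : 0 ≤ B)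
    (hQ : 0 ≤ Q) (hαQ : α * Q < 1) (h0 : u 0 ≤ 0)
    (hstep : ∀ k < n, u (k + 1) ≤ Q * u k + B * α ^ (n - k)) :
    ∀ k ≤ n, u k ≤ α * B / (1 - α * Q) * α ^ (n - k) := by
  have hden : 0 < 1 - α * Q := by linarith
  intro k
  induction k with
  | zero => intro _; exact h0.trans (by positivity)
  | succ k ih =>
    intro hk
    have hpow : α ^ (n - k) = α * α ^ (n - (k + 1)) := by
      rw [← pow_succ']; congr 1; omega
    calc u (k + 1) ≤ Q * u k + B * α ^ (n - k) := hstep k hk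
      _ ≤ Q * (α * B / (1 - α * Q) * α ^ (n - k)) + B * α ^ (n - k) := by
          gcongr; exact ih (by omega)
      _ = α * B / (1 - α * Q) * α ^ (n - (k + 1)) := by
          have hc : α * B / (1 - α * Q) * (1 - α * Q) = α * B := div_mul_cancel₀ _ hden.ne'
          rw [hpow]
          linear_combination (-α ^ (n - (k + 1))) * hc

section Fibre

variable {Θ : Type*} (S : Θ → Θ) {f : Θ → ℝ → ℝ} {s : Set ℝ}

theorem fiter_mapsTo (hmaps : ∀ θ, MapsTo (f θ) s s) (n : ℕ) (θ : Θ) :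
    MapsTo (fiter S f n θ) s s := by
  induction n with
  | zero => exact mapsTo_id s
  | succ n ih => exact (hmaps _).comp ih

theorem abs_fiter_succ_sub_le [PseudoMetricSpace Θ] {Q L : ℝ} (hmaps : ∀ θ, MapsTo (f θ) s s)
    (hQ : ∀ θ, ∀ a ∈ s, ∀ b ∈ s, |f θ a - f θ b| ≤ Q * |a - b|)
    (hLip : ∀ θ θ' : Θ, ∀ y ∈ s, |f θ y - f θ' y| ≤ L * dist θ θ')
    (a b : Θ) (k : ℕ) {y : ℝ} (hy : y ∈ s) :
    |fiter S f (k + 1) a y - fiter S f (k + 1) b y|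
      ≤ Q * |fiter S f k a y - fiter S f k b y| + L * dist (S^[k] a) (S^[k] b) := by
  have hya := fiter_mapsTo S hmaps k a hy
  have hyb := fiter_mapsTo S hmaps k b hy
  calc |fiter S f (k + 1) a y - fiter S f (k + 1) b y|
      ≤ |f (S^[k] a) (fiter S f k a y) - f (S^[k] a) (fiter S f k b y)|
        + |f (S^[k] a) (fiter S f k b y) - f (S^[k] b) (fiter S f k b y)| := abs_sub_le _ _ _
    _ ≤ _ := add_le_add (hQ _ _ hya _ hyb) (hLip _ _ _ hyb)

end Fibre

theorem stmt2_general {Θ : Type*} [MetricSpace Θ]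
    (S : Θ ≃ Θ) (M : ℝ)
    (f : Θ → ℝ → ℝ)
    (hmaps : ∀ θ, MapsTo (f θ) (Icc (-M) M) (Ioo (-M) M))
    (hC1 : ∀ θ, ContDiffOn ℝ 1 (f θ) (Icc (-M) M))
    (hpos : ∀ θ, ∀ y ∈ Icc (-M) M, 0 < derivWithin (f θ) (Icc (-M) M) y)
    (L C α Qf : ℝ) (hL : 0 ≤ L) (hC : 0 < C) (hα : α ∈ Ioo (0:ℝ) 1)
    (hLip : ∀ θ θ' : Θ, ∀ y ∈ Icc (-M) M, |f θ y - f θ' y| ≤ L * dist θ θ')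
    (hQf : ∀ θ, ∀ y ∈ Icc (-M) M, derivWithin (f θ) (Icc (-M) M) y ≤ Qf)
    (hαQ : α * Qf < 1)
    (θ θ' : Θ)
    (hstable : ∀ n : ℕ, 0 < n →
      dist ((⇑S.symm)^[n] θ) ((⇑S.symm)^[n] θ') ≤ C * α ^ n * dist θ θ') :
    ∀ n k : ℕ, k ≤ n → ∀ y ∈ Icc (-M) M,
      |fiter S f k ((⇑S.symm)^[n] θ) y - fiter S f k ((⇑S.symm)^[n] θ') y|
        ≤ (α * C * L / (1 - α * Qf)) * α ^ (n - k) * dist θ θ' := by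
  intro n k hk y hy
  have hQf0 : 0 ≤ Qf := (hpos θ y hy).le.trans (hQf θ y hy)
  have hmapsI : ∀ θ, MapsTo (f θ) (Icc (-M) M) (Icc (-M) M) :=
    fun θ => (hmaps θ).mono_right Ioo_subset_Icc_self
  have hLipQ : ∀ θ, ∀ a ∈ Icc (-M) M, ∀ b ∈ Icc (-M) M, |f θ a - f θ b| ≤ Qf * |a - b| :=
    fun θ _ ha _ hb => abs_image_sub_le_of_derivWithin_le (convex_Icc _ _)
      ((hC1 θ).differentiableOn one_ne_zero) (fun x hx => (hpos θ x hx).le) (hQf θ) ha hb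
  have hstep : ∀ j < n,
      |fiter S f (j + 1) (S.symm^[n] θ) y - fiter S f (j + 1) (S.symm^[n] θ') y|
        ≤ Qf * |fiter S f j (S.symm^[n] θ) y - fiter S f j (S.symm^[n] θ') y|
          + C * L * dist θ θ' * α ^ (n - j) := fun j hj => by
    refine (abs_fiter_succ_sub_le S hmapsI hLipQ hLip _ _ j hy).trans ?_
    rw [S.iterate_apply_iterate_symm hj.le, S.iterate_apply_iterate_symm hj.le]
    have := mul_le_mul_of_nonneg_left (hstable (n - j) (by omega)) hL
    linarith
  calc _ ≤ α * (C * L * dist θ θ') / (1 - α * Qf) * α ^ (n - k) :=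
        le_mul_pow_of_le_mul_add_pow (u := fun j => |fiter S f j (S.symm^[n] θ) y
            - fiter S f j (S.symm^[n] θ') y|) hα.1.le (by positivity) hQf0 hαQ
          (by simp [fiter]) hstep k hk
    _ = _ := by ring

/-- Lemma `coro:id`. If `θ ↦ f_θ` is Lipschitz (`d⁰(f_θ, f_{θ'}) ≤ L·d(θ,θ')`),
`θ'` lies in the local stable fibre of `θ` (`d(S^{-n}θ, S^{-n}θ') ≤ Cα^n d(θ,θ')`), and
`α·Q_f < 1` with `Q_f = sup f'_θ`, then for `0 ≤ k ≤ n`,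
`d⁰(f^k_{S^{-n}θ} ∘ (f^k_{S^{-n}θ'})⁻¹, id) ≤ C' α^{n-k} d(θ,θ')` with
`C' = αCL/(1 - αQ_f)`. Substituting `z = f^k_{S^{-n}θ'}(y)`, the `d⁰` bound reads
`|f^k_{S^{-n}θ}(y) - f^k_{S^{-n}θ'}(y)| ≤ C' α^{n-k} d(θ,θ')` for all `y ∈ I`. -/
theorem stmt2 {Θ : Type*} [MetricSpace Θ] [CompactSpace Θ]
    (S : Θ ≃ Θ) (M : ℝ) (hM : 0 < M)
    (f : Θ → ℝ → ℝ)
    (hmaps : ∀ θ, MapsTo (f θ) (Icc (-M) M) (Ioo (-M) M))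
    (hmono : ∀ θ, StrictMonoOn (f θ) (Icc (-M) M))
    (hC1 : ∀ θ, ContDiffOn ℝ 1 (f θ) (Icc (-M) M))
    (hpos : ∀ θ, ∀ y ∈ Icc (-M) M, 0 < derivWithin (f θ) (Icc (-M) M) y)
    (L C α Qf : ℝ) (hL : 0 ≤ L) (hC : 0 < C) (hα : α ∈ Ioo (0:ℝ) 1)
    (hLip : ∀ θ θ' : Θ, ∀ y ∈ Icc (-M) M, |f θ y - f θ' y| ≤ L * dist θ θ')
    (hQf : ∀ θ, ∀ y ∈ Icc (-M) M, derivWithin (f θ) (Icc (-M) M) y ≤ Qf)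
    (hαQ : α * Qf < 1)
    (θ θ' : Θ)
    (hstable : ∀ n : ℕ, 0 < n →
      dist ((⇑S.symm)^[n] θ) ((⇑S.symm)^[n] θ') ≤ C * α ^ n * dist θ θ') :
    ∀ n k : ℕ, k ≤ n → ∀ y ∈ Icc (-M) M,
      |fiter S f k ((⇑S.symm)^[n] θ) y - fiter S f k ((⇑S.symm)^[n] θ') y|
        ≤ (α * C * L / (1 - α * Qf)) * α ^ (n - k) * dist θ θ' :=
  stmt2_general S M f hmaps hC1 hpos L C α Qf hL hC hα hLip hQf hαQ θ θ' hstable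
end

section
/- If Θ is a compact metric space and S a homeomorphism with continuous fibre maps, then φ⁻ is lower semi-continuous, φ⁺ is upper semi-continuous, and the global attractor GA = ⋂_{n∈ℕ} F^n(Θ × I) = {(θ,y) : φ⁻(θ) ≤ y ≤ φ⁺(θ)} is compact. -/
open Set Filter

section Aux

variable {Θ : Type*} {S : Θ → Θ} {M : ℝ} {f : Θ → ℝ → ℝ}

lemma fiter_maps (hmaps : ∀ θ, Set.MapsTo (f θ) (Set.Icc (-M) M) (Set.Ioo (-M) M)) :
    ∀ n θ, Set.MapsTo (fiter S f n θ) (Set.Icc (-M) M) (Set.Icc (-M) M) := by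
  intro n
  induction n with
  | zero => intro θ; exact Set.mapsTo_id _
  | succ n ih =>
      intro θ y hy
      exact Set.Ioo_subset_Icc_self (hmaps _ (ih θ hy))

lemma fiter_mono (hmaps : ∀ θ, Set.MapsTo (f θ) (Set.Icc (-M) M) (Set.Ioo (-M) M))
    (hmono : ∀ θ, StrictMonoOn (f θ) (Set.Icc (-M) M)) :
    ∀ n θ, MonotoneOn (fiter S f n θ) (Set.Icc (-M) M) := by
  intro n
  induction n with
  | zero => intro θ; exact monotoneOn_id
  | succ n ih =>
      intro θ y1 h1 y2 h2 h12
      exact (hmono _).monotoneOn (fiter_maps hmaps n θ h1)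
        (fiter_maps hmaps n θ h2) (ih θ h1 h2 h12)

lemma fiter_cont [TopologicalSpace Θ] (hS : Continuous S)
    (hf : Continuous fun p : Θ × ℝ => f p.1 p.2) :
    ∀ n, Continuous fun p : Θ × ℝ => fiter S f n p.1 p.2 := by
  intro n
  induction n with
  | zero => exact continuous_snd
  | succ n ih =>
      exact hf.comp (((hS.iterate n).comp continuous_fst).prodMk ih)

lemma fiter_shift : ∀ (n : ℕ) (θ : Θ) (y : ℝ),
    fiter S f (n + 1) θ y = fiter S f n (S θ) (f θ y) := by
  intro n
  induction n with
  | zero => intro θ y; rfl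
  | succ n ih =>
      intro θ y
      show f (S^[n+1] θ) (fiter S f (n+1) θ y) = f (S^[n] (S θ)) (fiter S f n (S θ) (f θ y))
      rw [ih θ y, Function.iterate_succ_apply]

lemma fiter_image (hM : (0:ℝ) < M)
    (hmaps : ∀ θ, Set.MapsTo (f θ) (Set.Icc (-M) M) (Set.Ioo (-M) M))
    (hmono : ∀ θ, StrictMonoOn (f θ) (Set.Icc (-M) M))
    (hf : ∀ θ, Continuous fun y => f θ y) (n : ℕ) (θ : Θ) :
    fiter S f n θ '' Set.Icc (-M) M = Set.Icc (fiter S f n θ (-M)) (fiter S f n θ M) := by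
  have hMM : (-M) ≤ M := by linarith
  have hcont : Continuous fun y => fiter S f n θ y := by
    induction n with
    | zero => exact continuous_id
    | succ n ih => exact (hf _).comp ih
  apply Set.Subset.antisymm
  · rintro _ ⟨y, hy, rfl⟩
    exact ⟨fiter_mono hmaps hmono n θ (Set.left_mem_Icc.2 hMM) hy hy.1,
      fiter_mono hmaps hmono n θ hy (Set.right_mem_Icc.2 hMM) hy.2⟩
  · exact intermediate_value_Icc hMM hcont.continuousOn

end Aux

/-- if `Θ` is a compact metric space and `S` a homeomorphism with continuous
fibre maps, then `φ⁻ = ⨆_n φ⁻_n` is lower semi-continuous, `φ⁺ = ⨅_n φ⁺_n` is upper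
semi-continuous, and the global attractor
`GA = ⋂_n F^n(Θ × I) = {(θ,y) : φ⁻(θ) ≤ y ≤ φ⁺(θ)}` is compact. -/
theorem stmt8 {Θ : Type*} [MetricSpace Θ] [CompactSpace Θ]
    (S : Θ ≃ Θ) (hS : Continuous S) (hSinv : Continuous S.symm)
    (M : ℝ) (hM : 0 < M)
    (f : Θ → ℝ → ℝ)
    (hf : Continuous fun p : Θ × ℝ => f p.1 p.2)
    (hmaps : ∀ θ, MapsTo (f θ) (Icc (-M) M) (Ioo (-M) M))
    (hmono : ∀ θ, StrictMonoOn (f θ) (Icc (-M) M)) :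
    LowerSemicontinuous (fun θ => ⨆ n, fiter S f n ((⇑S.symm)^[n] θ) (-M)) ∧
    UpperSemicontinuous (fun θ => ⨅ n, fiter S f n ((⇑S.symm)^[n] θ) M) ∧
    (⋂ n : ℕ, (fun p : Θ × ℝ => (S p.1, f p.1 p.2))^[n] '' (univ ×ˢ Icc (-M) M))
      = {p : Θ × ℝ | (⨆ n, fiter S f n ((⇑S.symm)^[n] p.1) (-M)) ≤ p.2 ∧
          p.2 ≤ ⨅ n, fiter S f n ((⇑S.symm)^[n] p.1) M} ∧
    IsCompact (⋂ n : ℕ,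
      (fun p : Θ × ℝ => (S p.1, f p.1 p.2))^[n] '' (univ ×ˢ Icc (-M) M)) := by
  have hMM : (-M) ≤ M := by linarith
  set φm : ℕ → Θ → ℝ := fun n θ => fiter S f n ((⇑S.symm)^[n] θ) (-M) with hφm
  set φp : ℕ → Θ → ℝ := fun n θ => fiter S f n ((⇑S.symm)^[n] θ) M with hφp
  have hfy : ∀ θ, Continuous fun y => f θ y := fun θ =>
    hf.comp (Continuous.prodMk_right θ)
  -- membership in Icc
  have hφm_mem : ∀ n θ, φm n θ ∈ Icc (-M) M := fun n θ =>
    fiter_maps hmaps n _ (left_mem_Icc.2 hMM)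
  have hφp_mem : ∀ n θ, φp n θ ∈ Icc (-M) M := fun n θ =>
    fiter_maps hmaps n _ (right_mem_Icc.2 hMM)
  -- continuity of φm n, φp n
  have hSiter : ∀ n : ℕ, Continuous fun θ : Θ => (⇑S.symm)^[n] θ := fun n =>
    hSinv.iterate n
  have hφm_cont : ∀ n, Continuous (φm n) := fun n =>
    (fiter_cont hS hf n).comp ((hSiter n).prodMk continuous_const)
  have hφp_cont : ∀ n, Continuous (φp n) := fun n =>
    (fiter_cont hS hf n).comp ((hSiter n).prodMk continuous_const)
  -- left inverse iterates
  have hLI : ∀ (n : ℕ) (θ : Θ), (⇑S)^[n] ((⇑S.symm)^[n] θ) = θ := fun n =>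
    (Function.LeftInverse.iterate S.apply_symm_apply n)
  have hRI : ∀ (n : ℕ) (θ : Θ), (⇑S.symm)^[n] ((⇑S)^[n] θ) = θ := fun n =>
    (Function.LeftInverse.iterate S.symm_apply_apply n)
  -- monotonicity in n
  have hφm_monoN : ∀ θ, Monotone fun n => φm n θ := by
    intro θ
    apply monotone_nat_of_le_succ
    intro n
    have key : φm (n+1) θ = fiter S f n ((⇑S.symm)^[n] θ) (f ((⇑S.symm)^[n+1] θ) (-M)) := by
      have := fiter_shift (S := ⇑S) (f := f) n ((⇑S.symm)^[n+1] θ) (-M)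
      simp only [hφm]
      rw [this]
      congr 1
      rw [Function.iterate_succ_apply', S.apply_symm_apply]
    rw [key]
    have hfm := hmaps ((⇑S.symm)^[n+1] θ) (left_mem_Icc.2 hMM)
    exact fiter_mono hmaps hmono n _ (left_mem_Icc.2 hMM)
      (Ioo_subset_Icc_self hfm) hfm.1.le
  have hφp_antiN : ∀ θ, Antitone fun n => φp n θ := by
    intro θ
    apply antitone_nat_of_succ_le
    intro n
    have key : φp (n+1) θ = fiter S f n ((⇑S.symm)^[n] θ) (f ((⇑S.symm)^[n+1] θ) M) := by
      have := fiter_shift (S := ⇑S) (f := f) n ((⇑S.symm)^[n+1] θ) M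
      simp only [hφp]
      rw [this]
      congr 1
      rw [Function.iterate_succ_apply', S.apply_symm_apply]
    rw [key]
    have hfm := hmaps ((⇑S.symm)^[n+1] θ) (right_mem_Icc.2 hMM)
    exact fiter_mono hmaps hmono n _ (Ioo_subset_Icc_self hfm)
      (right_mem_Icc.2 hMM) hfm.2.le
  -- boundedness
  have hbddA : ∀ θ, BddAbove (range fun n => φm n θ) := by
    intro θ; exact ⟨M, by rintro _ ⟨n, rfl⟩; exact (hφm_mem n θ).2⟩
  have hbddB : ∀ θ, BddBelow (range fun n => φp n θ) := by
    intro θ; exact ⟨-M, by rintro _ ⟨n, rfl⟩; exact (hφp_mem n θ).1⟩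
  -- semicontinuity
  have hLSC : LowerSemicontinuous (fun θ => ⨆ n, φm n θ) := by
    intro θ c hc
    obtain ⟨n, hn⟩ := exists_lt_of_lt_ciSup hc
    have : ∀ᶠ θ' in nhds θ, c < φm n θ' :=
      ContinuousAt.eventually_lt continuousAt_const (hφm_cont n).continuousAt hn
    filter_upwards [this] with θ' hθ'
    exact lt_of_lt_of_le hθ' (le_ciSup (hbddA θ') n)
  have hUSC : UpperSemicontinuous (fun θ => ⨅ n, φp n θ) := by
    intro θ c hc
    obtain ⟨n, hn⟩ := exists_lt_of_ciInf_lt hc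
    have : ∀ᶠ θ' in nhds θ, φp n θ' < c :=
      ContinuousAt.eventually_lt (hφp_cont n).continuousAt continuousAt_const hn
    filter_upwards [this] with θ' hθ'
    exact lt_of_le_of_lt (ciInf_le (hbddB θ') n) hθ'
  -- the skew-product map and its iterates
  set F : Θ × ℝ → Θ × ℝ := fun p => (S p.1, f p.1 p.2) with hF
  have hFiter : ∀ (n : ℕ) (θ : Θ) (y : ℝ),
      F^[n] (θ, y) = ((⇑S)^[n] θ, fiter S f n θ y) := by
    intro n
    induction n with
    | zero => intro θ y; rfl
    | succ n ih =>
        intro θ y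
        rw [Function.iterate_succ_apply', ih]
        simp only [hF, Function.iterate_succ_apply']
        rfl
  -- description of each image
  have himg : ∀ n : ℕ, F^[n] '' (univ ×ˢ Icc (-M) M)
      = {p : Θ × ℝ | φm n p.1 ≤ p.2 ∧ p.2 ≤ φp n p.1} := by
    intro n
    ext p
    obtain ⟨θ, y⟩ := p
    constructor
    · rintro ⟨⟨θ₀, y₀⟩, ⟨-, hy₀⟩, heq⟩
      rw [hFiter, Prod.mk.injEq] at heq
      obtain ⟨hθeq, hyeq⟩ := heq
      have hθ₀ : θ₀ = (⇑S.symm)^[n] θ := by rw [← hθeq, hRI]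
      subst hθ₀
      subst hyeq
      exact ⟨fiter_mono hmaps hmono n _ (left_mem_Icc.2 hMM) hy₀ hy₀.1,
        fiter_mono hmaps hmono n _ hy₀ (right_mem_Icc.2 hMM) hy₀.2⟩
    · rintro ⟨h1, h2⟩
      have : y ∈ fiter S f n ((⇑S.symm)^[n] θ) '' Icc (-M) M := by
        rw [fiter_image hM hmaps hmono hfy n]
        exact ⟨h1, h2⟩
      obtain ⟨y₀, hy₀, hyeq⟩ := this
      refine ⟨((⇑S.symm)^[n] θ, y₀), ⟨mem_univ _, hy₀⟩, ?_⟩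
      rw [hFiter, hLI, hyeq]
  -- the attractor equality
  have hGA : (⋂ n : ℕ, F^[n] '' (univ ×ˢ Icc (-M) M))
      = {p : Θ × ℝ | (⨆ n, φm n p.1) ≤ p.2 ∧ p.2 ≤ ⨅ n, φp n p.1} := by
    ext p
    obtain ⟨θ, y⟩ := p
    simp only [mem_iInter, himg, mem_setOf_eq]
    constructor
    · intro h
      exact ⟨ciSup_le fun n => (h n).1, le_ciInf fun n => (h n).2⟩
    · intro ⟨h1, h2⟩ n
      exact ⟨le_trans (le_ciSup (hbddA θ) n) h1, le_trans h2 (ciInf_le (hbddB θ) n)⟩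
  -- compactness
  have hFcont : Continuous F := (hS.comp continuous_fst).prodMk hf
  have hPcpt : ∀ n : ℕ, IsCompact (F^[n] '' (univ ×ˢ Icc (-M) M)) := fun n =>
    (isCompact_univ.prod isCompact_Icc).image (hFcont.iterate n)
  have hcpt : IsCompact (⋂ n : ℕ, F^[n] '' (univ ×ˢ Icc (-M) M)) := by
    refine IsCompact.of_isClosed_subset (hPcpt 0) ?_ (iInter_subset _ 0)
    exact isClosed_iInter fun n => (hPcpt n).isClosed
  exact ⟨hLSC, hUSC, hGA, hcpt⟩
end

section
/- The hatted bounding graphs φ̂^±(θ) := G_θ(φ^±(θ)) satisfy φ̂^±(θ) = φ^±(σΠθ); in particular, φ̂^± depend on θ only through Πθ. -/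
open Set

/-- Lemma `lem:hp`. The hatted bounding graphs `φ̂^±(θ) = G_θ(φ^±(θ))` satisfy
`φ̂^±(θ) = φ^±(σΠθ)`; in particular they depend on `θ` only through `Πθ`. Here
`G_θ = G_{θ,σΠθ} : K(θ) → K(σΠθ)` is the orientation-preserving (strictly monotone)
bijection of Proposition `theo:g`, `K(θ) = [φ⁻(θ), φ⁺(θ)]`. -/
theorem stmt10 {Θ X : Type*}
    (Pr : Θ → X) (σ : X → Θ)
    (φm φp : Θ → ℝ) (hle : ∀ θ, φm θ ≤ φp θ)
    (G : Θ → ℝ → ℝ)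
    (hGmono : ∀ θ, StrictMonoOn (G θ) (Icc (φm θ) (φp θ)))
    (hGim : ∀ θ, G θ '' Icc (φm θ) (φp θ) = Icc (φm (σ (Pr θ))) (φp (σ (Pr θ)))) :
    (∀ θ, G θ (φp θ) = φp (σ (Pr θ)) ∧ G θ (φm θ) = φm (σ (Pr θ))) ∧
    (∀ θ₁ θ₂, Pr θ₁ = Pr θ₂ →
      G θ₁ (φp θ₁) = G θ₂ (φp θ₂) ∧ G θ₁ (φm θ₁) = G θ₂ (φm θ₂)) := by
  have key : ∀ θ, G θ (φp θ) = φp (σ (Pr θ)) ∧ G θ (φm θ) = φm (σ (Pr θ)) := by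
    intro θ
    have ha : φm θ ∈ Icc (φm θ) (φp θ) := ⟨le_refl _, hle θ⟩
    have hb : φp θ ∈ Icc (φm θ) (φp θ) := ⟨hle θ, le_refl _⟩
    have hmem_a : G θ (φm θ) ∈ Icc (φm (σ (Pr θ))) (φp (σ (Pr θ))) := by
      rw [← hGim θ]; exact ⟨_, ha, rfl⟩
    have hmem_b : G θ (φp θ) ∈ Icc (φm (σ (Pr θ))) (φp (σ (Pr θ))) := by
      rw [← hGim θ]; exact ⟨_, hb, rfl⟩
    have hmin : φm (σ (Pr θ)) ∈ G θ '' Icc (φm θ) (φp θ) := by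
      rw [hGim θ]; exact ⟨le_refl _, hmem_a.1.trans hmem_a.2⟩
    have hmax : φp (σ (Pr θ)) ∈ G θ '' Icc (φm θ) (φp θ) := by
      rw [hGim θ]; exact ⟨hmem_a.1.trans hmem_a.2, le_refl _⟩
    obtain ⟨x, hx, hxeq⟩ := hmin
    obtain ⟨y, hy, hyeq⟩ := hmax
    have h1 : G θ (φm θ) ≤ φm (σ (Pr θ)) := by
      rw [← hxeq]
      exact (hGmono θ).monotoneOn ha hx hx.1
    have h2 : φp (σ (Pr θ)) ≤ G θ (φp θ) := by
      rw [← hyeq]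
      exact (hGmono θ).monotoneOn hy hb hy.2
    exact ⟨le_antisymm hmem_b.2 h2, le_antisymm h1 hmem_a.1⟩
  refine ⟨key, fun θ₁ θ₂ h => ?_⟩
  rw [(key θ₁).1, (key θ₁).2, (key θ₂).1, (key θ₂).2, h]
  exact ⟨rfl, rfl⟩
end

section
/- Define f̂_θ := f_{S^{−1}(σΠSθ)} ∘ G_{σΠθ, S^{−1}σΠSθ}. Then σΠ(S^{−1}σΠSθ) = σΠ(σΠθ), so f̂_θ is well defined; moreover f̂_θ(K̂(θ)) = K̂(Sθ) where K̂(θ) := K(σΠθ), and f̂_θ depends on θ only through Π(Sθ). -/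
open Set

/-- well-definedness and basic properties of
`f̂_θ := f_{S⁻¹(σΠSθ)} ∘ G_{σΠθ, S⁻¹σΠSθ}`. One has `σΠ(S⁻¹σΠSθ) = σΠ(σΠθ)` (so `f̂_θ` is
well defined), `f̂_θ(K̂(θ)) = K̂(Sθ)` where `K̂(θ) = K(σΠθ)`, and `f̂_θ` depends on `θ` only
through `Π(Sθ)`. Hypotheses: `Ŝ ∘ Π = Π ∘ S⁻¹`, `Π ∘ σ = id`, `f_θ(K(θ)) = K(Sθ)`, and
`G_{θ,θ'}(K(θ)) = K(θ')` for the relevant pairs. -/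
theorem stmt11 {Θ X : Type*}
    (S : Θ ≃ Θ) (Sh : X → X) (Pr : Θ → X) (σ : X → Θ)
    (hPrσ : ∀ u, Pr (σ u) = u)
    (hfac : ∀ θ, Sh (Pr θ) = Pr (S.symm θ))
    (f : Θ → ℝ → ℝ)
    (φm φp : Θ → ℝ) (hle : ∀ θ, φm θ ≤ φp θ)
    (hfK : ∀ θ, f θ '' Icc (φm θ) (φp θ) = Icc (φm (S θ)) (φp (S θ)))
    (G : Θ → Θ → ℝ → ℝ)
    (hGK : ∀ θ, G (σ (Pr θ)) (S.symm (σ (Pr (S θ)))) '' Icc (φm (σ (Pr θ))) (φp (σ (Pr θ)))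
      = Icc (φm (S.symm (σ (Pr (S θ))))) (φp (S.symm (σ (Pr (S θ)))))) :
    (∀ θ, σ (Pr (S.symm (σ (Pr (S θ))))) = σ (Pr (σ (Pr θ)))) ∧
    (∀ θ, (fun y => f (S.symm (σ (Pr (S θ)))) (G (σ (Pr θ)) (S.symm (σ (Pr (S θ)))) y)) ''
        Icc (φm (σ (Pr θ))) (φp (σ (Pr θ)))
      = Icc (φm (σ (Pr (S θ)))) (φp (σ (Pr (S θ))))) ∧
    (∀ θ₁ θ₂, Pr (S θ₁) = Pr (S θ₂) →
      (fun y => f (S.symm (σ (Pr (S θ₁)))) (G (σ (Pr θ₁)) (S.symm (σ (Pr (S θ₁)))) y))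
        = fun y => f (S.symm (σ (Pr (S θ₂)))) (G (σ (Pr θ₂)) (S.symm (σ (Pr (S θ₂)))) y)) := by
  have key : ∀ θ : Θ, Pr (S.symm (σ (Pr (S θ)))) = Pr θ := by
    intro θ
    rw [← hfac, hPrσ, hfac, S.symm_apply_apply]
  refine ⟨fun θ => by rw [key, hPrσ], fun θ => ?_, fun θ₁ θ₂ h => ?_⟩
  · have : (fun y => f (S.symm (σ (Pr (S θ)))) (G (σ (Pr θ)) (S.symm (σ (Pr (S θ)))) y))
        = f (S.symm (σ (Pr (S θ)))) ∘ G (σ (Pr θ)) (S.symm (σ (Pr (S θ)))) := rfl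
    rw [this, image_comp, hGK θ, hfK, S.apply_symm_apply]
  · have h' : Pr θ₁ = Pr θ₂ := by
      rw [← S.symm_apply_apply θ₁, ← S.symm_apply_apply θ₂, ← hfac, ← hfac, h]
    rw [h, h']
end

section
/- The conjugation identity f_θ = G_{Sθ}⁻¹ ∘ f̂_θ ∘ G_θ holds on K(θ) for every θ ∈ Θ, where G_θ = G_{θ,σΠθ} and f̂_θ = f_{S^{−1}(σΠSθ)} ∘ G_{σΠθ, S^{−1}σΠSθ}. -/
/-!
Pull a point `y ∈ K(θ)` back to preimages `xₙ` under `f^n_{S^{-n}θ}` and push them forward along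
the backward orbits of `θ' = σΠθ` and `θ₂ = S⁻¹σΠSθ`. Along `θ'` this converges to `z = G_{θ,θ'} y`.
Along `θ₂` it converges to `G_{θ',θ₂} z`, although the points of the `θ'`-orbit approach `z` from
possibly outside `K(θ')`, where the uniform convergence `G_{θ',θ₂,n} → G_{θ',θ₂}` gives no control:
splitting at a depth `k`, the first `n - k` steps along the two orbits differ by `O(αᵏ)` thanks to
the exponential closeness of the orbits, and the last `k` steps expand by at most `Q_fᵏ`, so the
discrepancy is `O((αQ_f)ᵏ)`. Finally `f_{θ₂} ∘ f^n_{S^{-n}θ₂} = f^{n+1}_{S^{-n-1}σΠSθ}` and `xₙ` is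
also a level-`(n+1)` preimage of `f_θ y` over `Sθ`, so both sides of the identity are limits of
the same sequence.
-/

open Set Filter

/-- The maps `G_{θ,θ',n} = f^n_{S^{-n}θ'} ∘ (f^n_{S^{-n}θ})⁻¹` on `K_n(θ)`. -/
noncomputable def Gn {Θ : Type*} (S : Θ ≃ Θ) (f : Θ → ℝ → ℝ) (M : ℝ)
    (θ θ' : Θ) (n : ℕ) (y : ℝ) : ℝ :=
  fiter S f n ((⇑S.symm)^[n] θ')
    (Function.invFunOn (fiter S f n ((⇑S.symm)^[n] θ)) (Icc (-M) M) y)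

open Topology

/-- `fiterTo S f n θ = f^n_{S^{-n}θ}` carries the fibre over `S^{-n}θ` to the fibre over `θ`. -/
def fiterTo {Θ : Type*} (S : Θ ≃ Θ) (f : Θ → ℝ → ℝ) (n : ℕ) (θ : Θ) : ℝ → ℝ :=
  fiter S f n ((⇑S.symm)^[n] θ)

theorem tendsto_of_tendsto_comp_of_injOn {X Y ι : Type*} [TopologicalSpace X]
    [TopologicalSpace Y] [T2Space Y] {s : Set X} (hs : IsCompact s) {g : X → Y}
    (hg : ContinuousOn g s) (hinj : InjOn g s) {l : Filter ι} {u : ι → X} (hu : ∀ i, u i ∈ s)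
    {v : X} (hv : v ∈ s) (h : Tendsto (g ∘ u) l (𝓝 (g v))) : Tendsto u l (𝓝 v) := by
  have := isCompact_iff_compactSpace.mp hs
  have hemb : IsEmbedding (s.domRestrict g) :=
    (hg.domRestrict.isClosedEmbedding hinj.injective).isEmbedding
  have hsub : Tendsto (fun i => (⟨u i, hu i⟩ : s)) l (𝓝 ⟨v, hv⟩) :=
    hemb.tendsto_nhds_iff.mpr h
  exact (continuous_subtype_val.tendsto _).comp hsub

theorem ContinuousOn.tendsto_comp_of_isClosed {X Y ι : Type*} [TopologicalSpace X]
    [TopologicalSpace Y] {s : Set X} (hs : IsClosed s) {g : X → Y} (hg : ContinuousOn g s)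
    {l : Filter ι} [l.NeBot] {u : ι → X} (hu : ∀ i, u i ∈ s) {v : X} (h : Tendsto u l (𝓝 v)) :
    Tendsto (g ∘ u) l (𝓝 (g v)) :=
  (hg v (hs.mem_of_tendsto h (.of_forall hu))).tendsto.comp
    (tendsto_nhdsWithin_iff.2 ⟨h, .of_forall hu⟩)

section Fibres

variable {Θ : Type*} (S : Θ ≃ Θ) (f : Θ → ℝ → ℝ)

theorem fiterTo_zero (θ : Θ) : fiterTo S f 0 θ = id := funext fun _ => rfl

theorem fiterTo_succ (n : ℕ) (θ : Θ) :
    fiterTo S f (n + 1) θ = f (S.symm θ) ∘ fiterTo S f n (S.symm θ) := by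
  funext x
  simp only [fiterTo, fiter, Function.comp_apply, Function.iterate_succ_apply]
  rw [S.rightInverse_symm.iterate n (S.symm θ)]

theorem fiterTo_succ_apply_self (n : ℕ) (θ : Θ) (x : ℝ) :
    fiterTo S f (n + 1) (S θ) x = f θ (fiterTo S f n θ x) := by
  rw [fiterTo_succ, Function.comp_apply, Equiv.symm_apply_apply]

theorem fiterTo_add (k m : ℕ) (θ : Θ) (x : ℝ) :
    fiterTo S f (k + m) θ x = fiterTo S f k θ (fiterTo S f m ((⇑S.symm)^[k] θ) x) := by
  induction k generalizing θ with
  | zero => rw [Nat.zero_add, fiterTo_zero, id, Function.iterate_zero_apply]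
  | succ k ih =>
    rw [Nat.add_right_comm, fiterTo_succ, fiterTo_succ, Function.comp_apply, Function.comp_apply,
      ih, Function.iterate_succ_apply]

variable {S f} {I : Set ℝ}

theorem mapsTo_fiterTo (hmaps : ∀ θ, MapsTo (f θ) I I) (n : ℕ) (θ : Θ) :
    MapsTo (fiterTo S f n θ) I I := by
  induction n generalizing θ with
  | zero => rw [fiterTo_zero]; exact mapsTo_id I
  | succ n ih => rw [fiterTo_succ]; exact (hmaps _).comp (ih _)

theorem continuousOn_fiterTo (hmaps : ∀ θ, MapsTo (f θ) I I)
    (hcont : ∀ θ, ContinuousOn (f θ) I) (n : ℕ) (θ : Θ) : ContinuousOn (fiterTo S f n θ) I := by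
  induction n generalizing θ with
  | zero => rw [fiterTo_zero]; exact continuousOn_id
  | succ n ih => rw [fiterTo_succ]; exact (hcont _).comp (ih _) (mapsTo_fiterTo hmaps n _)

theorem strictMonoOn_fiterTo (hmaps : ∀ θ, MapsTo (f θ) I I)
    (hmono : ∀ θ, StrictMonoOn (f θ) I) (n : ℕ) (θ : Θ) : StrictMonoOn (fiterTo S f n θ) I := by
  induction n generalizing θ with
  | zero => rw [fiterTo_zero]; exact strictMonoOn_id
  | succ n ih => rw [fiterTo_succ]; exact (hmono _).comp (ih _) (mapsTo_fiterTo hmaps n _)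

theorem abs_fiterTo_sub_le {Q : ℝ} (hQ : 0 ≤ Q) (hmaps : ∀ θ, MapsTo (f θ) I I)
    (hlip : ∀ θ, ∀ a ∈ I, ∀ b ∈ I, |f θ a - f θ b| ≤ Q * |a - b|) (n : ℕ) (θ : Θ)
    {a b : ℝ} (ha : a ∈ I) (hb : b ∈ I) :
    |fiterTo S f n θ a - fiterTo S f n θ b| ≤ Q ^ n * |a - b| := by
  induction n generalizing θ with
  | zero => simp [fiterTo_zero]
  | succ n ih =>
    rw [fiterTo_succ, Function.comp_apply, Function.comp_apply, pow_succ', mul_assoc]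
    exact (hlip _ _ (mapsTo_fiterTo hmaps n _ ha) _ (mapsTo_fiterTo hmaps n _ hb)).trans
      (mul_le_mul_of_nonneg_left (ih _) hQ)

theorem Gn_fiterTo {M : ℝ} {θ : Θ} (θ' : Θ) {n : ℕ}
    (hinj : InjOn (fiterTo S f n θ) (Icc (-M) M)) {x : ℝ} (hx : x ∈ Icc (-M) M) :
    Gn S f M θ θ' n (fiterTo S f n θ x) = fiterTo S f n θ' x := by
  show fiterTo S f n θ' (Function.invFunOn (fiterTo S f n θ) _ (fiterTo S f n θ x)) = _
  rw [hinj.leftInvOn_invFunOn hx]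

theorem tendsto_fiterTo_sub_of_eq (hI : IsCompact I) (hmaps : ∀ θ, MapsTo (f θ) I I)
    (hcont : ∀ θ, ContinuousOn (f θ) I) (hmono : ∀ θ, StrictMonoOn (f θ) I) {θ : Θ}
    {a b : ℕ → ℝ} (ha : ∀ n, a n ∈ I) (hb : ∀ n, b n ∈ I) {z : ℝ}
    (hbz : ∀ n, fiterTo S f n θ (b n) = z)
    (haz : Tendsto (fun n => fiterTo S f n θ (a n)) atTop (𝓝 z)) (k : ℕ) :
    Tendsto (fun m => fiterTo S f m ((⇑S.symm)^[k] θ) (a (k + m))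
      - fiterTo S f m ((⇑S.symm)^[k] θ) (b (k + m))) atTop (𝓝 0) := by
  have hinj := (strictMonoOn_fiterTo (S := S) hmaps hmono k θ).injOn
  have hb_inner : ∀ m, fiterTo S f m ((⇑S.symm)^[k] θ) (b (k + m)) = b k := fun m =>
    hinj (mapsTo_fiterTo hmaps m _ (hb _)) (hb k) (by rw [← fiterTo_add, hbz, hbz])
  have ha_inner : Tendsto (fun m => fiterTo S f m ((⇑S.symm)^[k] θ) (a (k + m))) atTop
      (𝓝 (b k)) := by
    refine tendsto_of_tendsto_comp_of_injOn hI (continuousOn_fiterTo hmaps hcont k θ) hinj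
      (fun m => mapsTo_fiterTo hmaps m _ (ha _)) (hb k) ?_
    rw [hbz]
    refine (haz.comp (tendsto_atTop_mono (fun m => Nat.le_add_left m k) tendsto_id)).congr
      fun m => ?_
    simp only [Function.comp_apply, fiterTo_add]
  simpa only [hb_inner, sub_self] using ha_inner.sub_const (b k)

end Fibres

section Stable

variable {Θ : Type*} [PseudoMetricSpace Θ] {S : Θ ≃ Θ} {f : Θ → ℝ → ℝ} {I : Set ℝ}
  {L C α Q : ℝ}

/-- The constant `L C α / (1 - α Q)` is the sum of the geometric series `∑ L C αʲ⁺¹ Qʲ`. -/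
theorem abs_fiterTo_sub_fiterTo_le (hL : 0 ≤ L) (hC : 0 ≤ C) (hα : 0 ≤ α) (hQ : 0 ≤ Q)
    (hαQ : α * Q < 1) (hmaps : ∀ θ, MapsTo (f θ) I I)
    (hLip : ∀ θ θ' : Θ, ∀ y ∈ I, |f θ y - f θ' y| ≤ L * dist θ θ')
    (hlip : ∀ θ, ∀ a ∈ I, ∀ b ∈ I, |f θ a - f θ b| ≤ Q * |a - b|) (n : ℕ)
    {θ₁ θ₂ : Θ} {D : ℝ} (hD : 0 ≤ D)
    (hd : ∀ j, dist ((⇑S.symm)^[j] θ₁) ((⇑S.symm)^[j] θ₂) ≤ C * α ^ j * D) :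
    ∀ x ∈ I, |fiterTo S f n θ₂ x - fiterTo S f n θ₁ x| ≤ L * C * α / (1 - α * Q) * D := by
  have hden : 0 < 1 - α * Q := by linarith
  induction n generalizing θ₁ θ₂ D with
  | zero => intro x _; simp only [fiterTo_zero, id, sub_self, abs_zero]; positivity
  | succ n ih =>
    intro x hx
    have hd' : ∀ j, dist ((⇑S.symm)^[j] (S.symm θ₁)) ((⇑S.symm)^[j] (S.symm θ₂))
        ≤ C * α ^ j * (α * D) := fun j => by
      simpa only [← Function.iterate_succ_apply, pow_succ, mul_assoc] using hd (j + 1)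
    have hd₁ : dist (S.symm θ₂) (S.symm θ₁) ≤ C * α * D := by
      simpa only [dist_comm, Function.iterate_one, pow_one] using hd 1
    set a := fiterTo S f n (S.symm θ₁) x
    set b := fiterTo S f n (S.symm θ₂) x
    have ha : a ∈ I := mapsTo_fiterTo hmaps n _ hx
    have hb : b ∈ I := mapsTo_fiterTo hmaps n _ hx
    have hba := ih (mul_nonneg hα hD) hd' x hx
    rw [fiterTo_succ, fiterTo_succ, Function.comp_apply, Function.comp_apply]
    calc |f (S.symm θ₂) b - f (S.symm θ₁) a|
        ≤ |f (S.symm θ₂) b - f (S.symm θ₁) b| + |f (S.symm θ₁) b - f (S.symm θ₁) a| :=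
          abs_sub_le _ _ _
      _ ≤ L * (C * α * D) + Q * (L * C * α / (1 - α * Q) * (α * D)) := by
          gcongr
          · exact (hLip _ _ _ hb).trans (mul_le_mul_of_nonneg_left hd₁ hL)
          · exact (hlip _ _ hb _ ha).trans (mul_le_mul_of_nonneg_left hba hQ)
      _ = L * C * α / (1 - α * Q) * D := by field_simp; ring

theorem abs_fiterTo_add_sub_le (hL : 0 ≤ L) (hC : 0 ≤ C) (hα : 0 ≤ α) (hQ : 0 ≤ Q)
    (hαQ : α * Q < 1) (hmaps : ∀ θ, MapsTo (f θ) I I)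
    (hLip : ∀ θ θ' : Θ, ∀ y ∈ I, |f θ y - f θ' y| ≤ L * dist θ θ')
    (hlip : ∀ θ, ∀ a ∈ I, ∀ b ∈ I, |f θ a - f θ b| ≤ Q * |a - b|) {θ₁ θ₂ : Θ}
    (hd : ∀ j, dist ((⇑S.symm)^[j] θ₁) ((⇑S.symm)^[j] θ₂) ≤ C * α ^ j * dist θ₁ θ₂)
    (k m : ℕ) {x x' : ℝ} (hx : x ∈ I) (hx' : x' ∈ I) :
    |fiterTo S f (k + m) θ₂ x - fiterTo S f (k + m) θ₂ x'|
      ≤ 2 * (L * C * α / (1 - α * Q) * dist θ₁ θ₂) * (α * Q) ^ k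
        + Q ^ k * |fiterTo S f m ((⇑S.symm)^[k] θ₁) x - fiterTo S f m ((⇑S.symm)^[k] θ₁) x'| := by
  set K := L * C * α / (1 - α * Q)
  have hdk : ∀ j, dist ((⇑S.symm)^[j] ((⇑S.symm)^[k] θ₁)) ((⇑S.symm)^[j] ((⇑S.symm)^[k] θ₂))
      ≤ C * α ^ j * (α ^ k * dist θ₁ θ₂) := fun j => by
    simpa only [← Function.iterate_add_apply, pow_add, mul_assoc] using hd (j + k)
  have hD : 0 ≤ α ^ k * dist θ₁ θ₂ := by positivity
  have hcmp := abs_fiterTo_sub_fiterTo_le hL hC hα hQ hαQ hmaps hLip hlip m hD hdk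
  set u := fiterTo S f m ((⇑S.symm)^[k] θ₁) x
  set u' := fiterTo S f m ((⇑S.symm)^[k] θ₁) x'
  set A := fiterTo S f m ((⇑S.symm)^[k] θ₂) x
  set B := fiterTo S f m ((⇑S.symm)^[k] θ₂) x'
  have hAB : |A - B| ≤ 2 * (K * (α ^ k * dist θ₁ θ₂)) + |u - u'| := by
    have hA : |A - u| ≤ K * (α ^ k * dist θ₁ θ₂) := hcmp x hx
    have hB : |B - u'| ≤ K * (α ^ k * dist θ₁ θ₂) := hcmp x' hx'
    have := abs_sub_le A u B
    have := abs_sub_le u u' B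
    rw [abs_sub_comm u' B] at this
    linarith
  rw [fiterTo_add, fiterTo_add]
  calc |fiterTo S f k θ₂ A - fiterTo S f k θ₂ B| ≤ Q ^ k * |A - B| :=
        abs_fiterTo_sub_le hQ hmaps hlip k θ₂ (mapsTo_fiterTo hmaps m _ hx)
          (mapsTo_fiterTo hmaps m _ hx')
    _ ≤ Q ^ k * (2 * (K * (α ^ k * dist θ₁ θ₂)) + |u - u'|) := by gcongr
    _ = 2 * (K * dist θ₁ θ₂) * (α * Q) ^ k + Q ^ k * |u - u'| := by ring

theorem tendsto_fiterTo_sub_of_stable (hL : 0 ≤ L) (hC : 0 ≤ C) (hα : 0 ≤ α) (hQ : 0 ≤ Q)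
    (hαQ : α * Q < 1) (hI : IsCompact I) (hmaps : ∀ θ, MapsTo (f θ) I I)
    (hcont : ∀ θ, ContinuousOn (f θ) I) (hmono : ∀ θ, StrictMonoOn (f θ) I)
    (hLip : ∀ θ θ' : Θ, ∀ y ∈ I, |f θ y - f θ' y| ≤ L * dist θ θ')
    (hlip : ∀ θ, ∀ a ∈ I, ∀ b ∈ I, |f θ a - f θ b| ≤ Q * |a - b|) {θ₁ θ₂ : Θ}
    (hd : ∀ j, dist ((⇑S.symm)^[j] θ₁) ((⇑S.symm)^[j] θ₂) ≤ C * α ^ j * dist θ₁ θ₂)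
    {a b : ℕ → ℝ} (ha : ∀ n, a n ∈ I) (hb : ∀ n, b n ∈ I) {z : ℝ}
    (hbz : ∀ n, fiterTo S f n θ₁ (b n) = z)
    (haz : Tendsto (fun n => fiterTo S f n θ₁ (a n)) atTop (𝓝 z)) :
    Tendsto (fun n => fiterTo S f n θ₂ (a n) - fiterTo S f n θ₂ (b n)) atTop (𝓝 0) := by
  set K := L * C * α / (1 - α * Q) * dist θ₁ θ₂
  rw [Metric.tendsto_atTop]
  intro ε hε
  have hgeom : Tendsto (fun k => 2 * K * (α * Q) ^ k) atTop (𝓝 0) := by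
    simpa using (tendsto_pow_atTop_nhds_zero_of_lt_one (mul_nonneg hα hQ) hαQ).const_mul (2 * K)
  obtain ⟨k, hk⟩ := (hgeom.eventually (gt_mem_nhds (half_pos hε))).exists
  have hinner : Tendsto (fun m => Q ^ k * (fiterTo S f m ((⇑S.symm)^[k] θ₁) (a (k + m))
      - fiterTo S f m ((⇑S.symm)^[k] θ₁) (b (k + m)))) atTop (𝓝 0) := by
    simpa using (tendsto_fiterTo_sub_of_eq hI hmaps hcont hmono ha hb hbz haz k).const_mul (Q ^ k)
  obtain ⟨N, hN⟩ := Metric.tendsto_atTop.mp hinner (ε / 2) (half_pos hε)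
  refine ⟨k + N, fun n hn => ?_⟩
  obtain ⟨m, rfl⟩ := Nat.exists_eq_add_of_le (le_of_add_le_left hn)
  have hm := hN m (by omega)
  rw [Real.dist_eq, sub_zero, abs_mul, abs_of_nonneg (pow_nonneg hQ k)] at hm
  rw [Real.dist_eq, sub_zero]
  calc _ ≤ 2 * K * (α * Q) ^ k + Q ^ k * |fiterTo S f m ((⇑S.symm)^[k] θ₁) (a (k + m))
          - fiterTo S f m ((⇑S.symm)^[k] θ₁) (b (k + m))| :=
        abs_fiterTo_add_sub_le hL hC hα hQ hαQ hmaps hLip hlip hd k m (ha _) (hb _)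
    _ < ε := by linarith

end Stable

section Graphs

variable {Θ : Type*} {S : Θ ≃ Θ} {f : Θ → ℝ → ℝ} {M : ℝ} {φm φp : Θ → ℝ}

theorem Icc_subset_image_fiterTo (hM : -M ≤ M)
    (hmaps : ∀ θ, MapsTo (f θ) (Icc (-M) M) (Icc (-M) M))
    (hcont : ∀ θ, ContinuousOn (f θ) (Icc (-M) M))
    (hφp : ∀ ϑ, Antitone (fun n => fiterTo S f n ϑ M) ∧
      Tendsto (fun n => fiterTo S f n ϑ M) atTop (𝓝 (φp ϑ)))
    (hφm : ∀ ϑ, Monotone (fun n => fiterTo S f n ϑ (-M)) ∧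
      Tendsto (fun n => fiterTo S f n ϑ (-M)) atTop (𝓝 (φm ϑ)))
    (θ : Θ) (n : ℕ) : Icc (φm θ) (φp θ) ⊆ fiterTo S f n θ '' Icc (-M) M :=
  (Icc_subset_Icc ((hφm θ).1.ge_of_tendsto (hφm θ).2 n) ((hφp θ).1.le_of_tendsto (hφp θ).2 n)).trans
    (intermediate_value_Icc hM (continuousOn_fiterTo hmaps hcont n θ))

theorem mem_Icc_of_tendsto_fiterTo (hM : -M ≤ M)
    (hmaps : ∀ θ, MapsTo (f θ) (Icc (-M) M) (Icc (-M) M))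
    (hmono : ∀ θ, StrictMonoOn (f θ) (Icc (-M) M))
    (hφp : ∀ ϑ, Tendsto (fun n => fiterTo S f n ϑ M) atTop (𝓝 (φp ϑ)))
    (hφm : ∀ ϑ, Tendsto (fun n => fiterTo S f n ϑ (-M)) atTop (𝓝 (φm ϑ)))
    {θ : Θ} {x : ℕ → ℝ} (hx : ∀ n, x n ∈ Icc (-M) M) {z : ℝ}
    (hz : Tendsto (fun n => fiterTo S f n θ (x n)) atTop (𝓝 z)) : z ∈ Icc (φm θ) (φp θ) := by
  have hmon n := (strictMonoOn_fiterTo (S := S) hmaps hmono n θ).monotoneOn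
  exact ⟨le_of_tendsto_of_tendsto' (hφm θ) hz fun n => hmon n (left_mem_Icc.2 hM) (hx n) (hx n).1,
    le_of_tendsto_of_tendsto' hz (hφp θ) fun n => hmon n (hx n) (right_mem_Icc.2 hM) (hx n).2⟩

theorem eq_apply_of_tendsto_fiterTo {I : Set ℝ} (hI : IsClosed I) (hmaps : ∀ θ, MapsTo (f θ) I I)
    (hcont : ∀ θ, ContinuousOn (f θ) I) {e : ℝ} (he : e ∈ I) {φ : Θ → ℝ}
    (hφ : ∀ ϑ, Tendsto (fun n => fiterTo S f n ϑ e) atTop (𝓝 (φ ϑ))) (θ : Θ) :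
    φ (S θ) = f θ (φ θ) := by
  refine tendsto_nhds_unique ((hφ (S θ)).comp (tendsto_add_atTop_nat 1))
    (((hcont θ).tendsto_comp_of_isClosed hI (fun n => mapsTo_fiterTo hmaps n θ he) (hφ θ)).congr
      fun n => ?_)
  rw [Function.comp_apply, Function.comp_apply, fiterTo_succ_apply_self]

theorem mapsTo_Icc_limits (hM : -M ≤ M) (hmaps : ∀ θ, MapsTo (f θ) (Icc (-M) M) (Icc (-M) M))
    (hcont : ∀ θ, ContinuousOn (f θ) (Icc (-M) M)) (hmono : ∀ θ, StrictMonoOn (f θ) (Icc (-M) M))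
    (hφp : ∀ ϑ, Tendsto (fun n => fiterTo S f n ϑ M) atTop (𝓝 (φp ϑ)))
    (hφm : ∀ ϑ, Tendsto (fun n => fiterTo S f n ϑ (-M)) atTop (𝓝 (φm ϑ))) (θ : Θ) :
    MapsTo (f θ) (Icc (φm θ) (φp θ)) (Icc (φm (S θ)) (φp (S θ))) := by
  intro y hy
  have hm : φm θ ∈ Icc (-M) M := isClosed_Icc.mem_of_tendsto (hφm θ)
    (.of_forall fun n => mapsTo_fiterTo hmaps n θ (left_mem_Icc.2 hM))
  have hp : φp θ ∈ Icc (-M) M := isClosed_Icc.mem_of_tendsto (hφp θ)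
    (.of_forall fun n => mapsTo_fiterTo hmaps n θ (right_mem_Icc.2 hM))
  have hyM : y ∈ Icc (-M) M := ⟨hm.1.trans hy.1, hy.2.trans hp.2⟩
  rw [eq_apply_of_tendsto_fiterTo isClosed_Icc hmaps hcont (left_mem_Icc.2 hM) hφm,
    eq_apply_of_tendsto_fiterTo isClosed_Icc hmaps hcont (right_mem_Icc.2 hM) hφp]
  exact ⟨(hmono θ).monotoneOn hm hyM hy.1, (hmono θ).monotoneOn hyM hp hy.2⟩

theorem tendsto_fiterTo_of_tendstoUniformlyOn [PseudoMetricSpace Θ] {L C α Q : ℝ}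
    (hM : -M ≤ M) (hL : 0 ≤ L) (hC : 0 ≤ C) (hα : 0 ≤ α) (hQ : 0 ≤ Q) (hαQ : α * Q < 1)
    (hmaps : ∀ θ, MapsTo (f θ) (Icc (-M) M) (Icc (-M) M))
    (hcont : ∀ θ, ContinuousOn (f θ) (Icc (-M) M))
    (hmono : ∀ θ, StrictMonoOn (f θ) (Icc (-M) M))
    (hLip : ∀ θ θ' : Θ, ∀ y ∈ Icc (-M) M, |f θ y - f θ' y| ≤ L * dist θ θ')
    (hlip : ∀ θ, ∀ a ∈ Icc (-M) M, ∀ b ∈ Icc (-M) M, |f θ a - f θ b| ≤ Q * |a - b|)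
    (hφp : ∀ ϑ, Antitone (fun n => fiterTo S f n ϑ M) ∧
      Tendsto (fun n => fiterTo S f n ϑ M) atTop (𝓝 (φp ϑ)))
    (hφm : ∀ ϑ, Monotone (fun n => fiterTo S f n ϑ (-M)) ∧
      Tendsto (fun n => fiterTo S f n ϑ (-M)) atTop (𝓝 (φm ϑ)))
    {θ₁ θ₂ : Θ}
    (hd : ∀ j, dist ((⇑S.symm)^[j] θ₁) ((⇑S.symm)^[j] θ₂) ≤ C * α ^ j * dist θ₁ θ₂)
    {G : ℝ → ℝ} (hG : TendstoUniformlyOn (Gn S f M θ₁ θ₂) G atTop (Icc (φm θ₁) (φp θ₁)))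
    {a : ℕ → ℝ} (ha : ∀ n, a n ∈ Icc (-M) M) {z : ℝ} (hz : z ∈ Icc (φm θ₁) (φp θ₁))
    (haz : Tendsto (fun n => fiterTo S f n θ₁ (a n)) atTop (𝓝 z)) :
    Tendsto (fun n => fiterTo S f n θ₂ (a n)) atTop (𝓝 (G z)) := by
  choose b hb hbz using fun n => Icc_subset_image_fiterTo hM hmaps hcont hφp hφm θ₁ n hz
  have hGb : Tendsto (fun n => fiterTo S f n θ₂ (b n)) atTop (𝓝 (G z)) :=
    (hG.tendsto_at hz).congr fun n => by
      rw [← hbz n, Gn_fiterTo θ₂ (strictMonoOn_fiterTo hmaps hmono n θ₁).injOn (hb n)]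
  simpa using (tendsto_fiterTo_sub_of_stable hL hC hα hQ hαQ isCompact_Icc hmaps hcont hmono
    hLip hlip hd ha hb hbz haz).add hGb

end Graphs

theorem stmt12_general {Θ X : Type*} [MetricSpace Θ]
    (S : Θ ≃ Θ) (M : ℝ) (hM : 0 < M)
    (f : Θ → ℝ → ℝ)
    (hmaps : ∀ θ, MapsTo (f θ) (Icc (-M) M) (Ioo (-M) M))
    (hmono : ∀ θ, StrictMonoOn (f θ) (Icc (-M) M))
    (hC1 : ∀ θ, ContDiffOn ℝ 1 (f θ) (Icc (-M) M))
    (hpos : ∀ θ, ∀ y ∈ Icc (-M) M, 0 < derivWithin (f θ) (Icc (-M) M) y)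
    (L C α Qf : ℝ) (hL : 0 ≤ L) (hC : 0 < C) (hα : α ∈ Ioo (0:ℝ) 1)
    (hLip : ∀ θ θ' : Θ, ∀ y ∈ Icc (-M) M, |f θ y - f θ' y| ≤ L * dist θ θ')
    (hQf : ∀ θ, ∀ y ∈ Icc (-M) M, derivWithin (f θ) (Icc (-M) M) y ≤ Qf)
    (hαQ : α * Qf < 1)
    -- bounding graphs
    (φm φp : Θ → ℝ)
    (hφp : ∀ ϑ : Θ, Antitone (fun n => fiter S f n ((⇑S.symm)^[n] ϑ) M) ∧
      Tendsto (fun n => fiter S f n ((⇑S.symm)^[n] ϑ) M) atTop (nhds (φp ϑ)))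
    (hφm : ∀ ϑ : Θ, Monotone (fun n => fiter S f n ((⇑S.symm)^[n] ϑ) (-M)) ∧
      Tendsto (fun n => fiter S f n ((⇑S.symm)^[n] ϑ) (-M)) atTop (nhds (φm ϑ)))
    -- the Markov factor structure (Hypothesis 2)
    (Pr : Θ → X) (σ : X → Θ)
    -- the local-stable-fibre relation and its contraction property
    (Rel : Θ → Θ → Prop)
    (hRel : ∀ θ θ', Rel θ θ' → ∀ n : ℕ,
      dist ((⇑S.symm)^[n] θ) ((⇑S.symm)^[n] θ') ≤ C * α ^ n * dist θ θ')
    (hRel1 : ∀ θ, Rel θ (σ (Pr θ)))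
    (hRel2 : ∀ θ, Rel (σ (Pr θ)) (S.symm (σ (Pr (S θ)))))
    -- G_{θ,θ'} as uniform limit of the G_{θ,θ',n} for stable pairs
    (G : Θ → Θ → ℝ → ℝ)
    (hG : ∀ θ θ', Rel θ θ' →
      TendstoUniformlyOn (Gn S f M θ θ') (G θ θ') atTop (Icc (φm θ) (φp θ))) :
    ∀ θ : Θ, ∀ y ∈ Icc (φm θ) (φp θ),
      G (S θ) (σ (Pr (S θ))) (f θ y)
        = f (S.symm (σ (Pr (S θ))))
            (G (σ (Pr θ)) (S.symm (σ (Pr (S θ)))) (G θ (σ (Pr θ)) y)) := by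
  intro θ y hy
  set θ'' := σ (Pr (S θ))
  have hM' : -M ≤ M := by linarith
  have hmaps' : ∀ ϑ, MapsTo (f ϑ) (Icc (-M) M) (Icc (-M) M) := fun ϑ =>
    (hmaps ϑ).mono_right Ioo_subset_Icc_self
  have hcont : ∀ ϑ, ContinuousOn (f ϑ) (Icc (-M) M) := fun ϑ => (hC1 ϑ).continuousOn
  have hQf0 : 0 ≤ Qf := (hpos θ M (right_mem_Icc.2 hM')).le.trans (hQf θ M (right_mem_Icc.2 hM'))
  have hlip : ∀ ϑ, ∀ a ∈ Icc (-M) M, ∀ b ∈ Icc (-M) M, |f ϑ a - f ϑ b| ≤ Qf * |a - b| :=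
    fun ϑ a ha b hb => by
      simpa only [Real.norm_eq_abs] using
        (convex_Icc (-M) M).norm_image_sub_le_of_norm_derivWithin_le
          ((hC1 ϑ).differentiableOn one_ne_zero)
          (fun x hx => (abs_of_pos (hpos ϑ x hx)).trans_le (hQf ϑ x hx)) hb ha
  have hinj : ∀ n ϑ, InjOn (fiterTo S f n ϑ) (Icc (-M) M) := fun n ϑ =>
    (strictMonoOn_fiterTo hmaps' hmono n ϑ).injOn
  choose x hx hxy using fun n => Icc_subset_image_fiterTo hM' hmaps' hcont hφp hφm θ n hy
  have hz : Tendsto (fun n => fiterTo S f n (σ (Pr θ)) (x n)) atTop (𝓝 (G θ (σ (Pr θ)) y)) :=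
    ((hG _ _ (hRel1 θ)).tendsto_at hy).congr fun n => by
      rw [← hxy n, Gn_fiterTo _ (hinj n θ) (hx n)]
  have hw := tendsto_fiterTo_of_tendstoUniformlyOn hM' hL hC.le hα.1.le hQf0 hαQ hmaps' hcont
    hmono hLip hlip hφp hφm (hRel _ _ (hRel2 θ)) (hG _ _ (hRel2 θ)) hx
    (mem_Icc_of_tendsto_fiterTo hM' hmaps' hmono (fun ϑ => (hφp ϑ).2) (fun ϑ => (hφm ϑ).2) hx hz)
    hz
  have hfy := mapsTo_Icc_limits hM' hmaps' hcont hmono (fun ϑ => (hφp ϑ).2) (fun ϑ => (hφm ϑ).2)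
    θ hy
  have hlhs : Tendsto (fun n => f (S.symm θ'') (fiterTo S f n (S.symm θ'') (x n))) atTop
      (𝓝 (G (S θ) θ'' (f θ y))) :=
    (((hG _ _ (hRel1 (S θ))).tendsto_at hfy).comp (tendsto_add_atTop_nat 1)).congr fun n => by
      rw [Function.comp_apply, ← hxy n, ← fiterTo_succ_apply_self S f,
        Gn_fiterTo _ (hinj (n + 1) (S θ)) (hx n), fiterTo_succ, Function.comp_apply]
  exact tendsto_nhds_unique hlhs
    ((hcont _).tendsto_comp_of_isClosed isClosed_Icc (fun n => mapsTo_fiterTo hmaps' n _ (hx n)) hw)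

/-- Theorem `Lem:f`, equation (2.9). The conjugation identity
`f_θ = G_{Sθ}⁻¹ ∘ f̂_θ ∘ G_θ` holds on `K(θ)` for every `θ`, where `G_θ = G_{θ,σΠθ}` and
`f̂_θ = f_{S⁻¹(σΠSθ)} ∘ G_{σΠθ, S⁻¹σΠSθ}`; equivalently `G_{Sθ} ∘ f_θ = f̂_θ ∘ G_θ` on
`K(θ)`. The maps `G_{θ,θ'}` are the uniform limits of the `G_{θ,θ',n}` over pairs in the
same local stable fibre (relation `Rel`). -/
theorem stmt12 {Θ X : Type*} [MetricSpace Θ] [CompactSpace Θ]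
    (S : Θ ≃ Θ) (M : ℝ) (hM : 0 < M)
    (f : Θ → ℝ → ℝ)
    (hmaps : ∀ θ, MapsTo (f θ) (Icc (-M) M) (Ioo (-M) M))
    (hmono : ∀ θ, StrictMonoOn (f θ) (Icc (-M) M))
    (hC1 : ∀ θ, ContDiffOn ℝ 1 (f θ) (Icc (-M) M))
    (hpos : ∀ θ, ∀ y ∈ Icc (-M) M, 0 < derivWithin (f θ) (Icc (-M) M) y)
    (L C α Qf : ℝ) (hL : 0 ≤ L) (hC : 0 < C) (hα : α ∈ Ioo (0:ℝ) 1)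
    (hLip : ∀ θ θ' : Θ, ∀ y ∈ Icc (-M) M, |f θ y - f θ' y| ≤ L * dist θ θ')
    (hQf : ∀ θ, ∀ y ∈ Icc (-M) M, derivWithin (f θ) (Icc (-M) M) y ≤ Qf)
    (hαQ : α * Qf < 1)
    -- bounding graphs
    (φm φp : Θ → ℝ)
    (hφp : ∀ ϑ : Θ, Antitone (fun n => fiter S f n ((⇑S.symm)^[n] ϑ) M) ∧
      Tendsto (fun n => fiter S f n ((⇑S.symm)^[n] ϑ) M) atTop (nhds (φp ϑ)))
    (hφm : ∀ ϑ : Θ, Monotone (fun n => fiter S f n ((⇑S.symm)^[n] ϑ) (-M)) ∧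
      Tendsto (fun n => fiter S f n ((⇑S.symm)^[n] ϑ) (-M)) atTop (nhds (φm ϑ)))
    -- the Markov factor structure (Hypothesis 2)
    (Sh : X → X) (Pr : Θ → X) (σ : X → Θ)
    (hPrσ : ∀ u, Pr (σ u) = u)
    (hfac : ∀ θ, Sh (Pr θ) = Pr (S.symm θ))
    -- the local-stable-fibre relation and its contraction property
    (Rel : Θ → Θ → Prop)
    (hRel : ∀ θ θ', Rel θ θ' → ∀ n : ℕ,
      dist ((⇑S.symm)^[n] θ) ((⇑S.symm)^[n] θ') ≤ C * α ^ n * dist θ θ')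
    (hRel1 : ∀ θ, Rel θ (σ (Pr θ)))
    (hRel2 : ∀ θ, Rel (σ (Pr θ)) (S.symm (σ (Pr (S θ)))))
    -- G_{θ,θ'} as uniform limit of the G_{θ,θ',n} for stable pairs
    (G : Θ → Θ → ℝ → ℝ)
    (hG : ∀ θ θ', Rel θ θ' →
      TendstoUniformlyOn (Gn S f M θ θ') (G θ θ') atTop (Icc (φm θ) (φp θ))) :
    ∀ θ : Θ, ∀ y ∈ Icc (φm θ) (φp θ),
      G (S θ) (σ (Pr (S θ))) (f θ y)
        = f (S.symm (σ (Pr (S θ))))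
            (G (σ (Pr θ)) (S.symm (σ (Pr (S θ)))) (G θ (σ (Pr θ)) y)) :=
  stmt12_general S M hM f hmaps hmono hC1 hpos L C α Qf hL hC hα hLip hQf hαQ φm φp hφp hφm Pr σ Rel
    hRel hRel1 hRel2 G hG
end

section
/- For the Baker-driven system, either P ⊆ L, or C̃⁺ ∩ C̃⁻ = P̃ ⊆ P; in the latter case, since φ̃^± are semi-continuous (hence Baire class 1), P̃ is a residual subset of Θ. Consequently, either P ⊆ L (a set of measure zero for every S-invariant probability measure) or P is residual. -/
open Set Filter Topology

/-- The generalized Baker transformation on `𝔸² = [0,1)²` with parameter `a`. -/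
noncomputable def baker (a : ℝ) : ℝ × ℝ → ℝ × ℝ := fun p =>
  if p.1 < a then (p.1 / a, a * p.2) else ((p.1 - a) / (1 - a), a + (1 - a) * p.2)

namespace Stmt18Aux

/-- One step of the height IFS: `false ↦ a z`, `true ↦ a + (1-a) z`. -/
noncomputable def bstep (a : ℝ) (b : Bool) (z : ℝ) : ℝ := if b then a + (1 - a) * z else a * z

/-- Evaluation of a word (head outermost). -/
noncomputable def beval (a : ℝ) : List Bool → ℝ → ℝ
  | [], z => z
  | b :: l, z => bstep a b (beval a l z)

lemma beval_append (a : ℝ) (l₁ l₂ : List Bool) (z : ℝ) :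
    beval a (l₁ ++ l₂) z = beval a l₁ (beval a l₂ z) := by
  induction l₁ with
  | nil => rfl
  | cons b l ih => simp [beval, ih]

lemma beval_mem_Ioo (a : ℝ) (ha : a ∈ Ioo (0:ℝ) 1) {z : ℝ} (hz : z ∈ Ioo (0:ℝ) 1)
    (l : List Bool) : beval a l z ∈ Ioo (0:ℝ) 1 := by
  induction l with
  | nil => exact hz
  | cons b l ih =>
    obtain ⟨h0, h1⟩ := ih
    obtain ⟨ha0, ha1⟩ := ha
    cases b <;> simp only [beval, bstep, if_true, if_false, Bool.false_eq_true] <;>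
      constructor <;> nlinarith

lemma no_fix (a : ℝ) (ha : a ∈ Ioo (0:ℝ) 1) {l : List Bool} (hl : l ≠ []) :
    beval a l a ≠ a := by
  obtain ⟨b, t, rfl⟩ := List.exists_cons_of_ne_nil hl
  obtain ⟨h0, h1⟩ := beval_mem_Ioo a ha ha t
  obtain ⟨ha0, ha1⟩ := ha
  cases b <;> simp only [beval, bstep, if_true, if_false, Bool.false_eq_true] <;>
    intro h <;> nlinarith

/-- `z` eventually hits the discontinuity height `a` under some word. -/
def Hp (a z : ℝ) : Prop := ∃ l : List Bool, beval a l z = a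

lemma Hp_beval {a z : ℝ} {l : List Bool} (h : Hp a (beval a l z)) : Hp a z := by
  obtain ⟨v, hv⟩ := h
  exact ⟨v ++ l, by rw [beval_append]; exact hv⟩

/-- Escape lemma: from any height one can reach a "clean" height. -/
lemma escape (a : ℝ) (ha : a ∈ Ioo (0:ℝ) 1) (z : ℝ) :
    ∃ l : List Bool, ¬ Hp a (beval a l z) := by
  by_cases h : Hp a z
  · obtain ⟨u, hu⟩ := h
    refine ⟨false :: u, ?_⟩
    rintro ⟨v, hv⟩
    have h1 : beval a (false :: u) z = a * a := by
      simp [beval, bstep, hu]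
    rw [h1] at hv
    have h2 : beval a (v ++ [false]) a = a := by
      rw [beval_append]
      simpa [beval, bstep] using hv
    exact no_fix a ha (by simp) h2
  · exact ⟨[], h⟩

lemma iter_snd (a : ℝ) : ∀ (k : ℕ) (p : ℝ × ℝ),
    ∃ l : List Bool, ((baker a)^[k] p).2 = beval a l p.2 := by
  intro k
  induction k with
  | zero => exact fun p => ⟨[], rfl⟩
  | succ k ih =>
    intro p
    rw [Function.iterate_succ_apply]
    obtain ⟨l, hl⟩ := ih (baker a p)
    by_cases h : p.1 < a
    · refine ⟨l ++ [false], ?_⟩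
      rw [beval_append, hl]
      congr 1
      simp [baker, h, beval, bstep]
    · refine ⟨l ++ [true], ?_⟩
      rw [beval_append, hl]
      congr 1
      simp [baker, h, beval, bstep]

lemma approx (a : ℝ) (ha : a ∈ Ioo (0:ℝ) 1) {z : ℝ} (hz : z ∈ Ico (0:ℝ) 1) :
    ∀ (n : ℕ) (t : ℝ), t ∈ Ico (0:ℝ) 1 →
      ∃ l : List Bool, |beval a l z - t| ≤ (max a (1 - a)) ^ n := by
  obtain ⟨ha0, ha1⟩ := ha
  have hca : a ≤ max a (1 - a) := le_max_left _ _
  have hcb : 1 - a ≤ max a (1 - a) := le_max_right _ _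
  have hc0 : (0:ℝ) ≤ max a (1 - a) := le_trans ha0.le hca
  intro n
  induction n with
  | zero =>
    intro t ht
    refine ⟨[], ?_⟩
    rw [pow_zero]
    show |z - t| ≤ 1
    rw [abs_sub_le_iff]
    exact ⟨by linarith [hz.2, ht.1], by linarith [hz.1, ht.2]⟩
  | succ n ih =>
    intro t ht
    by_cases h : t < a
    · obtain ⟨l, hl⟩ := ih (t / a) ⟨div_nonneg ht.1 ha0.le, (div_lt_one ha0).2 h⟩
      refine ⟨false :: l, ?_⟩
      have he : beval a (false :: l) z - t = a * (beval a l z - t / a) := by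
        simp only [beval, bstep, if_false, Bool.false_eq_true]
        field_simp
      rw [he, abs_mul, abs_of_pos ha0, pow_succ]
      calc a * |beval a l z - t / a| ≤ max a (1 - a) * (max a (1 - a)) ^ n :=
            mul_le_mul hca hl (abs_nonneg _) hc0
        _ = (max a (1 - a)) ^ n * max a (1 - a) := mul_comm _ _
    · push_neg at h
      obtain ⟨l, hl⟩ := ih ((t - a) / (1 - a))
        ⟨div_nonneg (by linarith) (by linarith), (div_lt_one (by linarith)).2 (by linarith [ht.2])⟩
      refine ⟨true :: l, ?_⟩
      have he : beval a (true :: l) z - t = (1 - a) * (beval a l z - (t - a) / (1 - a)) := by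
        simp only [beval, bstep, if_true]
        have h1a : (1:ℝ) - a ≠ 0 := by linarith
        field_simp
        ring
      rw [he, abs_mul, abs_of_pos (by linarith : (0:ℝ) < 1 - a), pow_succ]
      calc (1 - a) * |beval a l z - (t - a) / (1 - a)|
            ≤ max a (1 - a) * (max a (1 - a)) ^ n := mul_le_mul hcb hl (abs_nonneg _) hc0
        _ = (max a (1 - a)) ^ n * max a (1 - a) := mul_comm _ _

end Stmt18Aux

open Stmt18Aux

/-- Theorem `theo:baker` and Corollary `coro:baker`. Either `P ⊆ L`, or
`C̃⁺ ∩ C̃⁻ = P̃ ⊆ P` and (since `φ̃^±` are semi-continuous, hence Baire class 1) `P̃` is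
residual in `Θ = 𝔸²`; consequently either `P ⊆ L` or `P` is residual. The hypotheses record
the context: `P̃ ⊆ P ⊆ P̃ ∪ L`, `P` is a union of horizontal fibres, `P` is `S`-invariant,
`φ̃⁺` is upper and `φ̃⁻` lower semi-continuous on `𝔸²` with `φ̃⁻ ≤ φ̃⁺`, and
`P̃ = {θ ∈ 𝔸² : φ̃⁺(θ) = φ̃⁻(θ)}`, `L = ⋃_{k≥0} S^{-k}(𝔸×{a})`. -/
theorem stmt18 (a : ℝ) (ha : a ∈ Ioo (0:ℝ) 1)
    (φtp φtm : ℝ × ℝ → ℝ)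
    (P Ptilde L : Set (ℝ × ℝ))
    (hL : L = ⋃ k : ℕ, (baker a)^[k] ⁻¹' (Ico (0:ℝ) 1 ×ˢ ({a} : Set ℝ)))
    (hPD : P ⊆ Ico (0:ℝ) 1 ×ˢ Ico (0:ℝ) 1)
    (hPt : Ptilde = {θ ∈ Ico (0:ℝ) 1 ×ˢ Ico (0:ℝ) 1 | φtp θ = φtm θ})
    (hPtP : Ptilde ⊆ P) (hPPtL : P ⊆ Ptilde ∪ L)
    (hfib : ∀ θ ∈ P, ∀ ξ ∈ Ico (0:ℝ) 1, ((ξ, θ.2) : ℝ × ℝ) ∈ P)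
    (hSP : ∀ θ ∈ P, baker a θ ∈ P)
    (husc : UpperSemicontinuousOn φtp (Ico (0:ℝ) 1 ×ˢ Ico (0:ℝ) 1))
    (hlsc : LowerSemicontinuousOn φtm (Ico (0:ℝ) 1 ×ˢ Ico (0:ℝ) 1))
    (hle : ∀ θ ∈ Ico (0:ℝ) 1 ×ˢ Ico (0:ℝ) 1, φtm θ ≤ φtp θ) :
    P ⊆ L ∨
    (({θ ∈ Ico (0:ℝ) 1 ×ˢ Ico (0:ℝ) 1 |
        ContinuousWithinAt φtp (Ico (0:ℝ) 1 ×ˢ Ico (0:ℝ) 1) θ ∧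
        ContinuousWithinAt φtm (Ico (0:ℝ) 1 ×ˢ Ico (0:ℝ) 1) θ} = Ptilde) ∧
      (Subtype.val ⁻¹' Ptilde : Set ↥(Ico (0:ℝ) 1 ×ˢ Ico (0:ℝ) 1))
        ∈ residual ↥(Ico (0:ℝ) 1 ×ˢ Ico (0:ℝ) 1) ∧
      (Subtype.val ⁻¹' P : Set ↥(Ico (0:ℝ) 1 ×ˢ Ico (0:ℝ) 1))
        ∈ residual ↥(Ico (0:ℝ) 1 ×ˢ Ico (0:ℝ) 1)) := by
  classical
  by_cases hPL : P ⊆ L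
  · exact Or.inl hPL
  right
  obtain ⟨ha0, ha1⟩ := ha
  set D : Set (ℝ × ℝ) := Ico (0:ℝ) 1 ×ˢ Ico (0:ℝ) 1 with hD
  obtain ⟨θ₀, hθ₀P, -⟩ := not_subset.1 hPL
  -- every point of the word-tree of θ₀.2 is a full fibre contained in P
  have hQ : ∀ l : List Bool, beval a l θ₀.2 ∈ Ico (0:ℝ) 1 ∧
      ∀ ξ ∈ Ico (0:ℝ) 1, ((ξ, beval a l θ₀.2) : ℝ × ℝ) ∈ P := by
    intro l
    induction l with
    | nil => exact ⟨(hPD hθ₀P).2, fun ξ hξ => hfib θ₀ hθ₀P ξ hξ⟩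
    | cons b l ih =>
      obtain ⟨⟨hz0, hz1⟩, hzP⟩ := ih
      set z := beval a l θ₀.2 with hzdef
      cases b
      · -- step `f : z ↦ a z`, use the fibre point `(a/2, z)`
        have hx : a / 2 ∈ Ico (0:ℝ) 1 := ⟨by linarith, by linarith⟩
        have hmem : ((a / 2, z) : ℝ × ℝ) ∈ P := hzP _ hx
        have hb : baker a (a / 2, z) ∈ P := hSP _ hmem
        have h2 : (baker a (a / 2, z)).2 = a * z := by
          simp [baker, show a / 2 < a by linarith]
        have hIco : a * z ∈ Ico (0:ℝ) 1 :=
          ⟨mul_nonneg ha0.le hz0, by nlinarith⟩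
        refine ⟨?_, ?_⟩
        · simpa [beval, bstep] using hIco
        · intro ξ hξ
          have := hfib _ hb ξ hξ
          rw [h2] at this
          simpa [beval, bstep] using this
      · -- step `g : z ↦ a + (1-a) z`, use the fibre point `((a+1)/2, z)`
        have hx : (a + 1) / 2 ∈ Ico (0:ℝ) 1 := ⟨by linarith, by linarith⟩
        have hmem : (((a + 1) / 2, z) : ℝ × ℝ) ∈ P := hzP _ hx
        have hb : baker a ((a + 1) / 2, z) ∈ P := hSP _ hmem
        have h2 : (baker a ((a + 1) / 2, z)).2 = a + (1 - a) * z := by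
          simp [baker, show ¬ ((a + 1) / 2 < a) by push_neg; linarith]
        have hIco : a + (1 - a) * z ∈ Ico (0:ℝ) 1 := by
          constructor
          · nlinarith
          · nlinarith
        refine ⟨?_, ?_⟩
        · simpa [beval, bstep] using hIco
        · intro ξ hξ
          have := hfib _ hb ξ hξ
          rw [h2] at this
          simpa [beval, bstep] using this
  -- get a clean starting height
  obtain ⟨lesc, hclean⟩ := escape a ⟨ha0, ha1⟩ θ₀.2
  set z₁ : ℝ := beval a lesc θ₀.2 with hz₁def
  have hz₁Ico : z₁ ∈ Ico (0:ℝ) 1 := (hQ lesc).1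
  -- key density statement
  have key : ∀ t ∈ Ico (0:ℝ) 1, ∀ x ∈ Ico (0:ℝ) 1, ∀ ε > (0:ℝ),
      ∃ z, ((x, z) : ℝ × ℝ) ∈ Ptilde ∧ |z - t| < ε := by
    intro t ht x hx ε hε
    have hc1 : max a (1 - a) < 1 := max_lt ha1 (by linarith)
    obtain ⟨n, hn⟩ := exists_pow_lt_of_lt_one hε hc1
    obtain ⟨l, hl⟩ := approx a ⟨ha0, ha1⟩ hz₁Ico n t ht
    refine ⟨beval a l z₁, ?_, lt_of_le_of_lt hl hn⟩
    have hrew : beval a l z₁ = beval a (l ++ lesc) θ₀.2 := by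
      rw [beval_append]
    have hPmem : ((x, beval a l z₁) : ℝ × ℝ) ∈ P := by
      rw [hrew]; exact (hQ (l ++ lesc)).2 x hx
    have hnotL : ((x, beval a l z₁) : ℝ × ℝ) ∉ L := by
      intro hmemL
      rw [hL] at hmemL
      obtain ⟨k, hk⟩ := mem_iUnion.1 hmemL
      obtain ⟨v, hv⟩ := iter_snd a k (x, beval a l z₁)
      have ha2 : beval a v (beval a l z₁) = a := by
        rw [← hv]
        exact (mem_prod.1 (mem_preimage.1 hk)).2
      exact hclean (Hp_beval (⟨v, ha2⟩ : Hp a (beval a l z₁)))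
    rcases hPPtL hPmem with h | h
    · exact h
    · exact absurd h hnotL
  have hPtD : Ptilde ⊆ D := by
    rw [hPt]; exact fun θ hθ => hθ.1
  -- closure of Ptilde contains D
  have hcl : ∀ θ ∈ D, θ ∈ closure Ptilde := by
    rintro ⟨x, t⟩ hθ
    obtain ⟨hx, ht⟩ := mem_prod.1 hθ
    rw [Metric.mem_closure_iff]
    intro ε hε
    obtain ⟨z, hzPt, hzd⟩ := key t ht x hx ε hε
    refine ⟨(x, z), hzPt, ?_⟩
    have : dist ((x, t) : ℝ × ℝ) (x, z) = |z - t| := by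
      rw [Prod.dist_eq]
      simp [Real.dist_eq, abs_sub_comm]
    rw [this]
    exact hzd
  -- Part (A): continuity set = Ptilde
  have hA : {θ ∈ D | ContinuousWithinAt φtp D θ ∧ ContinuousWithinAt φtm D θ} = Ptilde := by
    ext θ
    constructor
    · rintro ⟨hθD, hcp, hcm⟩
      rw [hPt]
      refine ⟨hθD, ?_⟩
      haveI hne : (𝓝[Ptilde] θ).NeBot := mem_closure_iff_nhdsWithin_neBot.1 (hcl θ hθD)
      have h1 : Tendsto φtp (𝓝[Ptilde] θ) (𝓝 (φtp θ)) := hcp.mono_left (nhdsWithin_mono θ hPtD)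
      have h2 : Tendsto φtm (𝓝[Ptilde] θ) (𝓝 (φtm θ)) := hcm.mono_left (nhdsWithin_mono θ hPtD)
      have heq : φtp =ᶠ[𝓝[Ptilde] θ] φtm :=
        eventually_mem_nhdsWithin.mono fun x hx => by
          rw [hPt] at hx; exact hx.2
      exact tendsto_nhds_unique (Filter.Tendsto.congr' heq h1) h2
    · intro hθ
      rw [hPt] at hθ
      obtain ⟨hθD, he⟩ := hθ
      refine ⟨hθD, ?_, ?_⟩
      · exact tendsto_order.2 ⟨by
          intro y hy
          have hy' : y < φtm θ := he ▸ hy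
          filter_upwards [hlsc θ hθD y hy', eventually_mem_nhdsWithin] with x h1 h2
          exact lt_of_lt_of_le h1 (hle x h2),
          fun y hy => husc θ hθD y hy⟩
      · exact tendsto_order.2 ⟨fun y hy => hlsc θ hθD y hy, by
          intro y hy
          have hy' : φtp θ < y := he ▸ hy
          filter_upwards [husc θ hθD y hy', eventually_mem_nhdsWithin] with x h1 h2
          exact lt_of_le_of_lt (hle x h2) h1⟩
  -- Part (B): Ptilde is a dense Gδ in the subtype
  have hGδ : IsGδ (Subtype.val ⁻¹' Ptilde : Set ↥D) := by
    have hset : (Subtype.val ⁻¹' Ptilde : Set ↥D) =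
        ⋂ n : ℕ, {q : ↥D | φtp q.val - φtm q.val < 1 / (n + 1)} := by
      ext q
      simp only [mem_preimage, mem_iInter, mem_setOf_eq, hPt, sep_setOf]
      constructor
      · rintro ⟨-, he⟩ n
        rw [he, sub_self]
        positivity
      · intro h
        refine ⟨q.2, ?_⟩
        have h1 : φtm q.val ≤ φtp q.val := hle q.val q.2
        have h2 : ¬ (0 < φtp q.val - φtm q.val) := by
          intro hpos
          obtain ⟨n, hn⟩ := exists_nat_one_div_lt hpos
          exact absurd (h n) (not_lt.2 hn.le)
        push_neg at h2
        linarith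
    rw [hset]
    refine IsGδ.iInter fun n => IsOpen.isGδ ?_
    rw [isOpen_iff_mem_nhds]
    intro q hq
    simp only [mem_setOf_eq] at hq
    set d : ℝ := (1 / (n + 1) - (φtp q.val - φtm q.val)) / 2 with hddef
    have hd : 0 < d := by
      rw [hddef]; linarith
    have e1 := husc q.val q.2 (φtp q.val + d) (by linarith)
    have e2 := hlsc q.val q.2 (φtm q.val - d) (by linarith)
    have e3 : ∀ᶠ x in 𝓝[D] q.val, φtp x - φtm x < 1 / (n + 1) := by
      filter_upwards [e1, e2] with x h1 h2
      rw [hddef] at h1 h2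
      linarith
    rw [← map_nhds_subtype_val q] at e3
    exact eventually_map.1 e3
  have hDense : Dense (Subtype.val ⁻¹' Ptilde : Set ↥D) := by
    rw [Metric.dense_iff]
    rintro ⟨⟨x, t⟩, hxt⟩ r hr
    obtain ⟨hx, ht⟩ := mem_prod.1 hxt
    obtain ⟨z, hzPt, hzd⟩ := key t ht x hx r hr
    refine ⟨⟨(x, z), hPtD hzPt⟩, ?_, hzPt⟩
    rw [Metric.mem_ball, Subtype.dist_eq]
    have : dist ((x, z) : ℝ × ℝ) (x, t) = |z - t| := by
      rw [Prod.dist_eq]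
      simp [Real.dist_eq]
    rw [this]
    exact hzd
  have hB : (Subtype.val ⁻¹' Ptilde : Set ↥D) ∈ residual ↥D :=
    residual_of_dense_Gδ hGδ hDense
  exact ⟨hA, hB, mem_of_superset hB (preimage_mono hPtP)⟩
end
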